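/- arXiv:1011.5305 — 6 statements merged into one kernel-verified Lean document; each statement's English description precedes it below -/
import Mathlib

section
/- For a complex number q with 0 < |q| < 1 and natural numbers n ≥ 1 and α ≥ 1, the weighted q-Bernoulli number satisfies the series identity: β̃_{n,q}^{(α)} = -(nα/[α]_q) · ∑_{m=0}^∞ q^{mα+m} [m]_{q^α}^{n-1} + (1-q) · ∑_{m=0}^∞ q^m [m]_{q^α}^n, where both series converge absolutely. -/
/-!
Expanding `[m]_z ^ k = (1 - z)⁻¹ ^ k * ∑ₗ C(k, l) (-1)ˡ z ^ (l m)` binomially turns each series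
into a finite combination of geometric series, so it converges absolutely and sums to
`(1 - z)⁻¹ ^ k * ∑ₗ C(k, l) (-1)ˡ / (1 - z ^ l w)`. On the other side, splitting the weight
`α l + 1` in the definition of `β̃` and absorbing `l * C(n, l) = n * C(n - 1, l - 1)` produces
exactly these two finite sums, for `z = q ^ α` and `w = q ^ (α + 1)`, `w = q`.
-/

noncomputable def qnum (q : ℂ) (x : ℕ) : ℂ := (1 - q ^ x) / (1 - q)

noncomputable def qB (q : ℂ) (a n : ℕ) : ℂ :=
  (1 - q) / (1 - q ^ a) ^ n *
    ∑ l ∈ Finset.range (n + 1),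
      (n.choose l : ℂ) * (-1) ^ l * ((a : ℂ) * l + 1) / (1 - q ^ (a * l + 1))

noncomputable def qBpoly (q : ℂ) (a n x : ℕ) : ℂ :=
  (1 - q) / (1 - q ^ a) ^ n *
    ∑ l ∈ Finset.range (n + 1),
      (n.choose l : ℂ) * (-1) ^ l * q ^ (a * l * x) * ((a : ℂ) * l + 1) / (1 - q ^ (a * l + 1))

open Finset

section GeometricSums

variable {K ι : Type*} [NormedField K] (s : Finset ι) (c r : ι → K)

theorem summable_norm_sum_mul_geometric (hr : ∀ i ∈ s, ‖r i‖ < 1) :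
    Summable fun m : ℕ => ‖∑ i ∈ s, c i * r i ^ m‖ := by
  refine Summable.of_nonneg_of_le (fun _ => norm_nonneg _) (fun m => norm_sum_le _ _) ?_
  refine summable_sum fun i hi => ?_
  simpa only [norm_mul, norm_pow] using
    (summable_geometric_of_lt_one (norm_nonneg _) (hr i hi)).mul_left ‖c i‖

theorem tsum_sum_mul_geometric (hr : ∀ i ∈ s, ‖r i‖ < 1) :
    ∑' m : ℕ, ∑ i ∈ s, c i * r i ^ m = ∑ i ∈ s, c i * (1 - r i)⁻¹ := by
  rw [Summable.tsum_finsetSum fun i hi =>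
    (summable_geometric_of_norm_lt_one (hr i hi)).mul_left (c i)]
  exact sum_congr rfl fun i hi => by rw [tsum_mul_left, tsum_geometric_of_norm_lt_one (hr i hi)]

theorem norm_pow_mul_lt_one {z w : K} (hz : ‖z‖ ≤ 1) (hw : ‖w‖ < 1) (l : ℕ) :
    ‖z ^ l * w‖ < 1 := by
  rw [norm_mul, norm_pow]
  exact mul_lt_one_of_nonneg_of_lt_one_right (pow_le_one₀ (norm_nonneg z) hz) (norm_nonneg w) hw

end GeometricSums

theorem pow_mul_qnum_pow_eq_sum (z w : ℂ) (k m : ℕ) :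
    w ^ m * qnum z m ^ k =
      ∑ l ∈ range (k + 1), (1 - z)⁻¹ ^ k * (k.choose l * (-1) ^ l) * (z ^ l * w) ^ m := by
  rw [qnum, div_eq_mul_inv, mul_pow, sub_eq_neg_add, add_pow, sum_mul, mul_sum]
  refine sum_congr rfl fun l _ => ?_
  ring

section QNumSeries

variable {z w : ℂ} (hz : ‖z‖ ≤ 1) (hw : ‖w‖ < 1) (k : ℕ)
include hz hw

theorem summable_norm_pow_mul_qnum_pow :
    Summable fun m : ℕ => ‖w ^ m * qnum z m ^ k‖ := by
  simp_rw [pow_mul_qnum_pow_eq_sum]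
  exact summable_norm_sum_mul_geometric _ _ _ fun l _ => norm_pow_mul_lt_one hz hw l

theorem tsum_pow_mul_qnum_pow :
    ∑' m : ℕ, w ^ m * qnum z m ^ k =
      (1 - z)⁻¹ ^ k * ∑ l ∈ range (k + 1), k.choose l * (-1) ^ l * (1 - z ^ l * w)⁻¹ := by
  simp_rw [pow_mul_qnum_pow_eq_sum]
  rw [tsum_sum_mul_geometric _ _ _ fun l _ => norm_pow_mul_lt_one hz hw l, mul_sum]
  exact sum_congr rfl fun l _ => by ring

end QNumSeries

theorem sum_choose_succ_mul_neg_one_pow_mul_cast {R : Type*} [CommRing R] (k : ℕ) (X : ℕ → R) :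
    ∑ l ∈ range (k + 2), ((k + 1).choose l : R) * (-1) ^ l * l * X l =
      -(k + 1 : R) * ∑ l ∈ range (k + 1), (k.choose l : R) * (-1) ^ l * X (l + 1) := by
  rw [sum_range_succ', mul_sum]
  simp only [Nat.cast_zero, mul_zero, zero_mul, add_zero]
  refine sum_congr rfl fun l _ => ?_
  have h := congrArg (Nat.cast : ℕ → R) (Nat.add_one_mul_choose_eq k l)
  push_cast at h ⊢
  linear_combination (-1 : R) ^ l * X (l + 1) * h

theorem qB_succ (q : ℂ) (a k : ℕ) :
    qB q a (k + 1) = (1 - q) / (1 - q ^ a) ^ (k + 1) *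
      (-((k + 1) * a) * ∑ l ∈ range (k + 1), k.choose l * (-1) ^ l * (1 - q ^ (a * (l + 1) + 1))⁻¹ +
        ∑ l ∈ range (k + 2), (k + 1).choose l * (-1) ^ l * (1 - q ^ (a * l + 1))⁻¹) := by
  have habs := sum_choose_succ_mul_neg_one_pow_mul_cast k fun l => (1 - q ^ (a * l + 1))⁻¹
  have hsplit : ∑ l ∈ range (k + 2),
      ((k + 1).choose l : ℂ) * (-1) ^ l * ((a : ℂ) * l + 1) / (1 - q ^ (a * l + 1)) =
        a * ∑ l ∈ range (k + 2), ((k + 1).choose l : ℂ) * (-1) ^ l * l * (1 - q ^ (a * l + 1))⁻¹ +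
          ∑ l ∈ range (k + 2), (k + 1).choose l * (-1) ^ l * (1 - q ^ (a * l + 1))⁻¹ := by
    rw [mul_sum, ← sum_add_distrib]
    exact sum_congr rfl fun l _ => by ring
  rw [qB, hsplit, habs]
  ring

theorem stmt0_general (q : ℂ) (hq1 : ‖q‖ < 1)
    (n a : ℕ) (hn : 1 ≤ n) (ha : 1 ≤ a) :
    Summable (fun m : ℕ => ‖q ^ (m * a + m) * qnum (q ^ a) m ^ (n - 1)‖) ∧
    Summable (fun m : ℕ => ‖q ^ m * qnum (q ^ a) m ^ n‖) ∧
    qB q a n =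
      -((n : ℂ) * a / qnum q a) * ∑' m : ℕ, q ^ (m * a + m) * qnum (q ^ a) m ^ (n - 1) +
        (1 - q) * ∑' m : ℕ, q ^ m * qnum (q ^ a) m ^ n := by
  obtain ⟨k, rfl⟩ : ∃ k, n = k + 1 := ⟨n - 1, by omega⟩
  have hqa : ‖q ^ a‖ ≤ 1 := by rw [norm_pow]; exact pow_le_one₀ (norm_nonneg q) hq1.le
  have hpow : ∀ j ≠ 0, ‖q ^ j‖ < 1 := fun j hj => by
    rw [norm_pow]; exact pow_lt_one₀ (norm_nonneg q) hq1 hj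
  have hqa1 := hpow (a + 1) a.succ_ne_zero
  have hw : ∀ m : ℕ, q ^ (m * a + m) = (q ^ (a + 1)) ^ m := fun m => by ring
  simp only [Nat.add_sub_cancel, hw]
  refine ⟨summable_norm_pow_mul_qnum_pow hqa hqa1 k,
    summable_norm_pow_mul_qnum_pow hqa hq1 (k + 1), ?_⟩
  have hexp₁ : ∀ l : ℕ, (q ^ a) ^ l * q ^ (a + 1) = q ^ (a * (l + 1) + 1) := fun l => by ring
  have hexp₂ : ∀ l : ℕ, (q ^ a) ^ l * q = q ^ (a * l + 1) := fun l => by ring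
  rw [tsum_pow_mul_qnum_pow hqa hqa1, tsum_pow_mul_qnum_pow hqa hq1, qB_succ, qnum]
  simp only [hexp₁, hexp₂, inv_pow]
  have hq : 1 - q ≠ 0 := (isUnit_one_sub_of_norm_lt_one hq1).ne_zero
  have hqa' : 1 - q ^ a ≠ 0 := (isUnit_one_sub_of_norm_lt_one (hpow a (by omega))).ne_zero
  field_simp
  push_cast
  ring

theorem stmt0 (q : ℂ) (hq0 : 0 < ‖q‖) (hq1 : ‖q‖ < 1)
    (n a : ℕ) (hn : 1 ≤ n) (ha : 1 ≤ a) :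
    Summable (fun m : ℕ => ‖q ^ (m * a + m) * qnum (q ^ a) m ^ (n - 1)‖) ∧
    Summable (fun m : ℕ => ‖q ^ m * qnum (q ^ a) m ^ n‖) ∧
    qB q a n =
      -((n : ℂ) * a / qnum q a) * ∑' m : ℕ, q ^ (m * a + m) * qnum (q ^ a) m ^ (n - 1) +
        (1 - q) * ∑' m : ℕ, q ^ m * qnum (q ^ a) m ^ n :=
  stmt0_general q hq1 n a hn ha
end

section
/- For q ∈ ℂ with 0 < |q| < 1, α ∈ ℕ with α ≥ 1, and t ∈ ℂ, the generating function F_q^{(α)}(t) = ∑_{n=0}^∞ β̃_{n,q}^{(α)} t^n/n! satisfies F_q^{(α)}(t) = -t·(α/[α]_q) ∑_{m=0}^∞ q^{mα+m} e^{[m]_{q^α} t} + (1-q) ∑_{m=0}^∞ q^m e^{[m]_{q^α} t}. -/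
open Finset Nat

theorem sum_range_choose_mul_neg_one_pow_mul_pow {R : Type*} [CommRing R] (y : R) (n : ℕ) :
    ∑ l ∈ range (n + 1), (n.choose l : R) * (-1) ^ l * y ^ l = (1 - y) ^ n := by
  rw [sub_eq_neg_add, add_pow]
  refine sum_congr rfl fun l _ => ?_
  rw [one_pow, mul_one, neg_pow]
  ring

theorem sum_range_choose_mul_neg_one_pow_mul_mul_pow {R : Type*} [CommRing R] (y : R) (n : ℕ) :
    ∑ l ∈ range (n + 1), (n.choose l : R) * (-1) ^ l * l * y ^ l
      = -n * y * (1 - y) ^ (n - 1) := by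
  cases n with
  | zero => simp
  | succ k =>
    have hterm (j : ℕ) :
        ((k + 1).choose (j + 1) : R) * (-1) ^ (j + 1) * ((j + 1 : ℕ) : R) * y ^ (j + 1)
          = -(k + 1) * y * ((k.choose j : R) * (-1) ^ j * y ^ j) := by
      have h := congrArg (Nat.cast : ℕ → R) (Nat.add_one_mul_choose_eq k j)
      push_cast at h ⊢
      linear_combination - (-1 : R) ^ (j + 1) * y ^ (j + 1) * h
    rw [sum_range_succ', sum_congr rfl fun j _ => hterm j, ← mul_sum,
      sum_range_choose_mul_neg_one_pow_mul_pow]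
    simp

theorem sum_range_choose_mul_neg_one_pow_mul_affine_mul_pow {R : Type*} [CommRing R]
    (c y : R) (n : ℕ) :
    ∑ l ∈ range (n + 1), (n.choose l : R) * (-1) ^ l * (c * l + 1) * y ^ l
      = (1 - y) ^ n - c * n * y * (1 - y) ^ (n - 1) := by
  have hsplit (l : ℕ) : (n.choose l : R) * (-1) ^ l * (c * l + 1) * y ^ l
      = c * ((n.choose l : R) * (-1) ^ l * l * y ^ l) + (n.choose l : R) * (-1) ^ l * y ^ l := by
    ring
  rw [sum_congr rfl fun l _ => hsplit l, sum_add_distrib, ← mul_sum,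
    sum_range_choose_mul_neg_one_pow_mul_mul_pow, sum_range_choose_mul_neg_one_pow_mul_pow]
  ring

theorem norm_qnum_le {q : ℂ} (hq : ‖q‖ ≤ 1) (m : ℕ) :
    ‖qnum q m‖ ≤ 2 / ‖1 - q‖ := by
  rw [qnum, norm_div]
  gcongr
  calc ‖1 - q ^ m‖ ≤ ‖(1 : ℂ)‖ + ‖q ^ m‖ := norm_sub_le _ _
    _ ≤ 1 + 1 := by
      rw [norm_one, norm_pow]
      gcongr
      exact pow_le_one₀ (norm_nonneg q) hq
    _ = 2 := by norm_num

section NormLtOne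

variable {𝕜 : Type*} [NormedDivisionRing 𝕜] {q : 𝕜} {k : ℕ}

theorem norm_pow_lt_one (hq : ‖q‖ < 1) (hk : k ≠ 0) : ‖q ^ k‖ < 1 := by
  rw [norm_pow]
  exact pow_lt_one₀ (norm_nonneg q) hq hk

theorem one_sub_pow_ne_zero (hq : ‖q‖ < 1) (hk : k ≠ 0) : 1 - q ^ k ≠ 0 :=
  sub_ne_zero.mpr fun h => by simpa [← h] using norm_pow_lt_one hq hk

end NormLtOne

theorem hasSum_mul_exp_series {w x : ℕ → ℂ} {C : ℝ} (hw : Summable w)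
    (hx : ∀ m, ‖x m‖ ≤ C) (t : ℂ) :
    HasSum (fun p : ℕ × ℕ => w p.2 * ((x p.2 * t) ^ p.1 / p.1 !))
      (∑' m, w m * Complex.exp (x m * t)) := by
  have hC : 0 ≤ C := (norm_nonneg _).trans (hx 0)
  have hsum : Summable fun p : ℕ × ℕ => w p.2 * ((x p.2 * t) ^ p.1 / p.1 !) := by
    refine Summable.of_norm_bounded ((Real.summable_pow_div_factorial (C * ‖t‖)).mul_of_nonneg
      (summable_norm_iff.mpr hw) (fun _ => by positivity) fun _ => norm_nonneg _) ?_
    rintro ⟨n, m⟩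
    simp only [norm_mul, norm_div, norm_pow, Complex.norm_natCast]
    rw [mul_comm]
    gcongr
    exact hx m
  have hrow (m : ℕ) :
      HasSum (fun n => w m * ((x m * t) ^ n / n !)) (w m * Complex.exp (x m * t)) := by
    have h := NormedSpace.expSeries_div_hasSum_exp (x m * t)
    rw [← Complex.exp_eq_exp_ℂ] at h
    exact h.mul_left (w m)
  have hswap := hsum.prod_symm.hasSum
  rw [(hswap.prod_fiberwise hrow).tsum_eq]
  exact (Equiv.prodComm ℕ ℕ).hasSum_iff.mp hswap

theorem hasSum_mul_deriv_exp_series {w x : ℕ → ℂ} {C : ℝ} (hw : Summable w)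
    (hx : ∀ m, ‖x m‖ ≤ C) (t : ℂ) :
    HasSum (fun p : ℕ × ℕ => w p.2 * (p.1 * x p.2 ^ (p.1 - 1) * t ^ p.1 / p.1 !))
      (t * ∑' m, w m * Complex.exp (x m * t)) := by
  have hinj : Function.Injective (Prod.map succ id : ℕ × ℕ → ℕ × ℕ) :=
    succ_injective.prodMap fun _ _ => id
  rw [← hinj.hasSum_iff]
  · refine ((hasSum_mul_exp_series hw hx t).mul_left t).congr_fun fun ⟨n, m⟩ => ?_
    simp only [Function.comp_apply, Prod.map_fst, Prod.map_snd, id, factorial_succ,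
      succ_eq_add_one]
    push_cast
    field_simp
    ring
  · rintro ⟨_ | n, m⟩ hp
    · simp
    · exact absurd ⟨(n, m), rfl⟩ hp

theorem hasSum_qB {q : ℂ} (hq : ‖q‖ < 1) {a : ℕ} (ha : 1 ≤ a) (n : ℕ) :
    HasSum (fun m => (1 - q) * q ^ m * qnum (q ^ a) m ^ n
        - a / qnum q a * q ^ (m * a + m) * (n * qnum (q ^ a) m ^ (n - 1))) (qB q a n) := by
  have hgeom (l : ℕ) :
      HasSum (fun m => (n.choose l : ℂ) * (-1) ^ l * ((a : ℂ) * l + 1) * (q ^ (a * l + 1)) ^ m)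
        ((n.choose l : ℂ) * (-1) ^ l * ((a : ℂ) * l + 1) / (1 - q ^ (a * l + 1))) := by
    rw [div_eq_mul_inv]
    exact (hasSum_geometric_of_norm_lt_one (norm_pow_lt_one hq (add_one_ne_zero _))).mul_left _
  have hq1 : 1 - q ≠ 0 := by simpa using one_sub_pow_ne_zero hq one_ne_zero
  have hqa : 1 - q ^ a ≠ 0 := one_sub_pow_ne_zero hq (by omega)
  refine ((hasSum_sum fun l _ => hgeom l).mul_left ((1 - q) / (1 - q ^ a) ^ n)).congr_fun
    fun m => ?_
  have hinner : ∑ l ∈ range (n + 1), (n.choose l : ℂ) * (-1) ^ l * ((a : ℂ) * l + 1)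
      * (q ^ (a * l + 1)) ^ m
      = q ^ m * ((1 - q ^ (a * m)) ^ n - a * n * q ^ (a * m) * (1 - q ^ (a * m)) ^ (n - 1)) := by
    rw [← sum_range_choose_mul_neg_one_pow_mul_affine_mul_pow, mul_sum]
    exact sum_congr rfl fun l _ => by ring
  rw [hinner, qnum, qnum, ← pow_mul]
  rcases n with _ | n
  · simp
  · rw [Nat.add_sub_cancel, div_pow, div_pow, pow_succ (1 - q ^ a)]
    field_simp
    ring

theorem stmt1_general (q : ℂ) (hq1 : ‖q‖ < 1)
    (a : ℕ) (ha : 1 ≤ a) (t : ℂ) :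
    ∑' n : ℕ, qB q a n * t ^ n / (n.factorial : ℂ) =
      -t * ((a : ℂ) / qnum q a) *
          ∑' m : ℕ, q ^ (m * a + m) * Complex.exp (qnum (q ^ a) m * t) +
        (1 - q) * ∑' m : ℕ, q ^ m * Complex.exp (qnum (q ^ a) m * t) := by
  have hX : ∀ m, ‖qnum (q ^ a) m‖ ≤ 2 / ‖1 - q ^ a‖ :=
    norm_qnum_le (by rw [norm_pow]; exact pow_le_one₀ (norm_nonneg q) hq1.le)
  have hexp := hasSum_mul_exp_series
    ((summable_geometric_of_norm_lt_one hq1).mul_left (1 - q)) hX t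
  have hderiv := hasSum_mul_deriv_exp_series (w := fun m => a / qnum q a * q ^ (m * a + m))
    (((summable_geometric_of_norm_lt_one (norm_pow_lt_one hq1 (add_one_ne_zero a))).mul_left
      (a / qnum q a)).congr fun m => by ring) hX t
  have hrow (n : ℕ) := (hasSum_qB hq1 ha n).mul_right (t ^ n / n !)
  calc ∑' n : ℕ, qB q a n * t ^ n / (n ! : ℂ) = ∑' n : ℕ, qB q a n * (t ^ n / n !) := by
        simp_rw [mul_div_assoc]
    _ = (∑' m, (1 - q) * q ^ m * Complex.exp (qnum (q ^ a) m * t))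
          - t * ∑' m, a / qnum q a * q ^ (m * a + m) * Complex.exp (qnum (q ^ a) m * t) :=
        ((hexp.sub hderiv).prod_fiberwise fun n => (hrow n).congr_fun fun m => by ring).tsum_eq
    _ = _ := by
        simp_rw [mul_assoc, tsum_mul_left]
        ring

theorem stmt1 (q : ℂ) (hq0 : 0 < ‖q‖) (hq1 : ‖q‖ < 1)
    (a : ℕ) (ha : 1 ≤ a) (t : ℂ) :
    ∑' n : ℕ, qB q a n * t ^ n / (n.factorial : ℂ) =
      -t * ((a : ℂ) / qnum q a) *
          ∑' m : ℕ, q ^ (m * a + m) * Complex.exp (qnum (q ^ a) m * t) +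
        (1 - q) * ∑' m : ℕ, q ^ m * Complex.exp (qnum (q ^ a) m * t) :=
  stmt1_general q hq1 a ha t
end

section
/- For q ∈ ℂ with 0 < |q| < 1, α ∈ ℕ with α ≥ 1, n ∈ ℕ, and x ∈ ℕ, the weighted q-Bernoulli polynomial satisfies the addition formula β̃_{n,q}^{(α)}(x) = ∑_{l=0}^n C(n,l) [x]_{q^α}^{n-l} q^{αlx} β̃_{l,q}^{(α)}. -/
/-! Writing `D = 1 - q^α` and `Q = q^{αx}`, both sides carry the factor `(1 - q) / D^n`, since
`[x]_{q^α} = (1 - Q) / D`. What remains is the binomial identity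
`∑_l C(n,l) Q^l (1 - Q)^{n-l} ∑_j C(l,j) F_j = ∑_j C(n,j) Q^j F_j`, obtained by exchanging the sums,
using `C(n,l) C(l,j) = C(n,j) C(n-j,l-j)` and collapsing `(Q + (1 - Q))^{n-j} = 1`. -/

open Finset

section BinomialTransform

variable {R : Type*} [CommSemiring R]

theorem sum_Ico_choose_mul_choose_mul_pow (x y : R) {n j : ℕ} (hj : j ≤ n) :
    ∑ l ∈ Ico j (n + 1), (n.choose l * l.choose j : R) * x ^ l * y ^ (n - l) =
      n.choose j * x ^ j * (x + y) ^ (n - j) := by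
  rw [sum_Ico_eq_sum_range, show n + 1 - j = n - j + 1 by omega, add_pow, mul_sum]
  refine sum_congr rfl fun m hm => ?_
  rw [mem_range] at hm
  rw [← Nat.cast_mul, Nat.choose_mul (Nat.le_add_right j m), Nat.add_sub_cancel_left,
    show n - (j + m) = n - j - m by omega, pow_add]
  push_cast
  ring

theorem sum_choose_mul_pow_mul_sum_choose (F : ℕ → R) (x y : R) (n : ℕ) :
    ∑ l ∈ range (n + 1), n.choose l * x ^ l * y ^ (n - l) *
        ∑ j ∈ range (l + 1), l.choose j * F j =
      ∑ j ∈ range (n + 1), n.choose j * x ^ j * (x + y) ^ (n - j) * F j := by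
  simp_rw [mul_sum, range_eq_Ico]
  rw [← sum_Ico_Ico_comm]
  refine sum_congr rfl fun j hj => ?_
  rw [← sum_Ico_choose_mul_choose_mul_pow x y (Nat.lt_succ_iff.mp (mem_Ico.mp hj).2), sum_mul]
  exact sum_congr rfl fun l _ => by ring

end BinomialTransform

noncomputable def qBcoeff (q : ℂ) (a j : ℕ) : ℂ :=
  (-1) ^ j * ((a : ℂ) * j + 1) / (1 - q ^ (a * j + 1))

theorem qB_eq (q : ℂ) (a n : ℕ) :
    qB q a n = (1 - q) / (1 - q ^ a) ^ n * ∑ l ∈ range (n + 1), n.choose l * qBcoeff q a l := by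
  unfold qB qBcoeff
  congr 1
  exact sum_congr rfl fun l _ => by ring

theorem qBpoly_eq (q : ℂ) (a n x : ℕ) :
    qBpoly q a n x = (1 - q) / (1 - q ^ a) ^ n *
      ∑ l ∈ range (n + 1), n.choose l * (q ^ (a * x)) ^ l * qBcoeff q a l := by
  unfold qBpoly qBcoeff
  congr 1
  refine sum_congr rfl fun l _ => ?_
  rw [← pow_mul, mul_right_comm a x l]
  ring

theorem qnum_pow_mul_qB (q : ℂ) (a x : ℕ) {n l : ℕ} (hl : l ≤ n) :
    qnum (q ^ a) x ^ (n - l) * qB q a l = (1 - q) / (1 - q ^ a) ^ n *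
      ((1 - q ^ (a * x)) ^ (n - l) * ∑ j ∈ range (l + 1), l.choose j * qBcoeff q a j) := by
  rw [qnum, div_pow, qB_eq, ← pow_mul, ← Nat.sub_add_cancel hl, pow_add, Nat.add_sub_cancel]
  ring

theorem stmt3_general (q : ℂ)
    (a : ℕ) (n x : ℕ) :
    qBpoly q a n x =
      ∑ l ∈ Finset.range (n + 1),
        (n.choose l : ℂ) * qnum (q ^ a) x ^ (n - l) * q ^ (a * l * x) * qB q a l := by
  have hterm : ∀ l ∈ range (n + 1),
      (n.choose l : ℂ) * qnum (q ^ a) x ^ (n - l) * q ^ (a * l * x) * qB q a l =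
        (1 - q) / (1 - q ^ a) ^ n * (n.choose l * (q ^ (a * x)) ^ l * (1 - q ^ (a * x)) ^ (n - l) *
          ∑ j ∈ range (l + 1), l.choose j * qBcoeff q a j) := by
    intro l hl
    rw [mul_right_comm, mul_assoc _ _ (qB q a l),
      qnum_pow_mul_qB q a x (Nat.lt_succ_iff.mp (mem_range.mp hl)), ← pow_mul,
      mul_right_comm a l x, pow_mul]
    ring
  rw [sum_congr rfl hterm, ← mul_sum, sum_choose_mul_pow_mul_sum_choose, add_sub_cancel, qBpoly_eq]
  simp only [one_pow, mul_one]

theorem stmt3 (q : ℂ) (hq0 : 0 < ‖q‖) (hq1 : ‖q‖ < 1)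
    (a : ℕ) (ha : 1 ≤ a) (n x : ℕ) :
    qBpoly q a n x =
      ∑ l ∈ Finset.range (n + 1),
        (n.choose l : ℂ) * qnum (q ^ a) x ^ (n - l) * q ^ (a * l * x) * qB q a l :=
  stmt3_general q a n x
end

section
/- For q ∈ ℂ with 0 < |q| < 1 and α ∈ ℕ with α ≥ 1: (i) β̃_{0,q}^{(α)} = 1; (ii) q·β̃_{1,q}^{(α)}(1) - β̃_{1,q}^{(α)} = α/[α]_q; (iii) for every n > 1, q·β̃_{n,q}^{(α)}(1) - β̃_{n,q}^{(α)} = 0. -/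
/-!
Multiplying by `q` turns `q^(αl)` into `q^(αl+1)`, which cancels the denominator `1 - q^(αl+1)`.
Hence `q β̃ₙ(1) - β̃ₙ` is `-(1-q)/(1-q^α)ⁿ` times `∑ₗ C(n,l) (-1)^l (αl+1)`, which up to sign is
the `n`-th forward difference at `0` of the linear function `l ↦ αl+1`: it equals `-α` for
`n = 1` and vanishes for `n ≥ 2`.
-/

open Finset Polynomial

theorem sum_range_choose_mul_neg_one_pow_mul_eval_eq_zero {R : Type*} [CommRing R] {n : ℕ}
    {P : R[X]} (hP : P.natDegree < n) :
    ∑ l ∈ range (n + 1), (n.choose l : R) * (-1) ^ l * P.eval (l : R) = 0 := by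
  have h := congrFun (fwdDiff_iter_eq_zero_of_degree_lt hP) 0
  rw [fwdDiff_iter_eq_sum_shift] at h
  have hsign : ∀ l ∈ range (n + 1), (-1 : R) ^ l = (-1) ^ n * (-1) ^ (n - l) := fun l hl => by
    obtain ⟨m, rfl⟩ := Nat.exists_eq_add_of_le (mem_range_succ_iff.1 hl)
    rw [Nat.add_sub_cancel_left, pow_add, mul_assoc, ← pow_add, ← two_mul, pow_mul]
    simp
  calc _ = (-1) ^ n *
        ∑ k ∈ range (n + 1), ((-1 : ℤ) ^ (n - k) * n.choose k) • P.eval (0 + k • 1) := by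
        rw [mul_sum]
        refine sum_congr rfl fun l hl => ?_
        rw [hsign l hl, zsmul_eq_mul, zero_add, nsmul_one]
        push_cast
        ring
    _ = 0 := by rw [h, Pi.zero_apply, mul_zero]

theorem sum_range_choose_mul_neg_one_pow_mul_linear_eq_zero {R : Type*} [CommRing R] {n : ℕ}
    (hn : 1 < n) (a b : R) :
    ∑ l ∈ range (n + 1), (n.choose l : R) * (-1) ^ l * (a * l + b) = 0 := by
  have hdeg : (C a * X + C b).natDegree < n := natDegree_linear_le.trans_lt hn
  simpa using sum_range_choose_mul_neg_one_pow_mul_eval_eq_zero hdeg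

theorem one_sub_pow_ne_zero_of_norm_lt_one {𝕜 : Type*} [NormedDivisionRing 𝕜] {q : 𝕜}
    (hq : ‖q‖ < 1) {k : ℕ} (hk : k ≠ 0) : 1 - q ^ k ≠ 0 := by
  intro h
  have := pow_lt_one₀ (norm_nonneg q) hq hk
  rw [← norm_pow, ← sub_eq_zero.1 h, norm_one] at this
  exact this.false

theorem q_mul_qBpoly_one_sub_qB {q : ℂ} (hq : ‖q‖ < 1) (a n : ℕ) :
    q * qBpoly q a n 1 - qB q a n =
      -((1 - q) / (1 - q ^ a) ^ n *
        ∑ l ∈ range (n + 1), (n.choose l : ℂ) * (-1) ^ l * ((a : ℂ) * l + 1)) := by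
  have hterm : ∀ l ∈ range (n + 1),
      q * ((n.choose l : ℂ) * (-1) ^ l * q ^ (a * l * 1) * ((a : ℂ) * l + 1) /
          (1 - q ^ (a * l + 1))) -
        (n.choose l : ℂ) * (-1) ^ l * ((a : ℂ) * l + 1) / (1 - q ^ (a * l + 1)) =
      -((n.choose l : ℂ) * (-1) ^ l * ((a : ℂ) * l + 1)) := fun l _ => by
    have := one_sub_pow_ne_zero_of_norm_lt_one hq (Nat.succ_ne_zero (a * l))
    rw [mul_one]
    field_simp
    ring
  rw [qBpoly, qB, mul_left_comm, ← mul_sub, mul_sum, ← sum_sub_distrib, sum_congr rfl hterm,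
    sum_neg_distrib, mul_neg]

theorem stmt5_general (q : ℂ) (hq1 : ‖q‖ < 1)
    (a : ℕ) :
    qB q a 0 = 1 ∧
    q * qBpoly q a 1 1 - qB q a 1 = (a : ℂ) / qnum q a ∧
    ∀ n : ℕ, 1 < n → q * qBpoly q a n 1 - qB q a n = 0 := by
  refine ⟨?_, ?_, fun n hn => ?_⟩
  · have h1 : 1 - q ≠ 0 := by simpa using one_sub_pow_ne_zero_of_norm_lt_one hq1 one_ne_zero
    simpa [qB] using mul_inv_cancel₀ h1
  · have hsum :
        ∑ l ∈ range (1 + 1), ((1 : ℕ).choose l : ℂ) * (-1) ^ l * ((a : ℂ) * l + 1) = -a := by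
      simp [sum_range_succ]
    rw [q_mul_qBpoly_one_sub_qB hq1, hsum, qnum, div_div_eq_mul_div]
    ring
  · rw [q_mul_qBpoly_one_sub_qB hq1, sum_range_choose_mul_neg_one_pow_mul_linear_eq_zero hn,
      mul_zero, neg_zero]

theorem stmt5 (q : ℂ) (hq0 : 0 < ‖q‖) (hq1 : ‖q‖ < 1)
    (a : ℕ) (ha : 1 ≤ a) :
    qB q a 0 = 1 ∧
    q * qBpoly q a 1 1 - qB q a 1 = (a : ℂ) / qnum q a ∧
    ∀ n : ℕ, 1 < n → q * qBpoly q a n 1 - qB q a n = 0 :=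
  stmt5_general q hq1 a
end

section
/- For q ∈ ℂ with 0 < |q| < 1, n ∈ ℕ, α ∈ ℕ with α ≥ 1, and x ∈ ℤ, the reflection formula holds: β̃_{n,q^{-1}}^{(α)}(1-x) = (-1)^n q^{αn} β̃_{n,q}^{(α)}(x), where β̃_{n,Q}^{(α)}(y) = (1-Q)/(1-Q^α)^n ∑_{l=0}^n C(n,l)(-1)^l Q^{αly} (αl+1)/(1-Q^{αl+1}) (note q^{-1} has modulus greater than 1, but the finite-sum definition still makes sense). -/
noncomputable def qnumZ (Q : ℂ) (y : ℤ) : ℂ := (1 - Q ^ y) / (1 - Q)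

/-- Weighted q-Bernoulli polynomial with integer argument `y`. -/
noncomputable def qBZ (Q : ℂ) (a n : ℕ) (y : ℤ) : ℂ :=
  (1 - Q) / (1 - Q ^ a) ^ n *
    ∑ l ∈ Finset.range (n + 1),
      (n.choose l : ℂ) * (-1) ^ l * Q ^ ((a : ℤ) * l * y) * ((a : ℂ) * l + 1) /
        (1 - Q ^ (a * l + 1))

/-! Since `(1 - q⁻ᵏ)⁻¹ = -qᵏ (1 - qᵏ)⁻¹`, the reflection formula is a termwise identity between
Laurent monomials in `q`, in which the factors `(1 - qᵏ)⁻¹` are carried along as opaque atoms. -/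

section Field

variable {K : Type*} [Field K] {q : K}

theorem inv_one_sub_inv_pow (hq : q ≠ 0) (k : ℕ) :
    (1 - q⁻¹ ^ k)⁻¹ = -q ^ k * (1 - q ^ k)⁻¹ := by
  have h : 1 - q⁻¹ ^ k = -(q ^ k)⁻¹ * (1 - q ^ k) := by
    rw [inv_pow]; field_simp; ring
  rw [h, mul_inv, inv_neg, inv_inv, neg_mul]

theorem inv_zpow_mul_one_sub (hq : q ≠ 0) (m : ℕ) (x : ℤ) :
    q⁻¹ ^ ((m : ℤ) * (1 - x)) = q ^ ((m : ℤ) * x) / q ^ m := by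
  rw [inv_zpow', ← zpow_natCast, div_eq_mul_inv, ← zpow_neg, ← zpow_add₀ hq]
  ring_nf

end Field

theorem qBZ_inv_one_sub {q : ℂ} (hq : q ≠ 0) (n a : ℕ) (x : ℤ) :
    qBZ q⁻¹ a n (1 - x) = (-1) ^ n * q ^ (a * n) * qBZ q a n x := by
  simp only [qBZ, div_eq_mul_inv, Finset.mul_sum]
  rw [← inv_pow (1 - q⁻¹ ^ a), ← inv_pow (1 - q ^ a)]
  refine Finset.sum_congr rfl fun l _ => ?_
  have hmon := inv_zpow_mul_one_sub hq (a * l) x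
  push_cast at hmon
  rw [hmon, inv_one_sub_inv_pow hq, inv_one_sub_inv_pow hq]
  generalize ((1 : ℂ) - q ^ a)⁻¹ = A
  generalize ((1 : ℂ) - q ^ (a * l + 1))⁻¹ = B
  field_simp
  ring

theorem stmt8_general (q : ℂ) (hq0 : 0 < ‖q‖)
    (n a : ℕ) (x : ℤ) :
    qBZ q⁻¹ a n (1 - x) = (-1) ^ n * q ^ (a * n) * qBZ q a n x :=
  qBZ_inv_one_sub (norm_pos_iff.mp hq0) n a x

theorem stmt8 (q : ℂ) (hq0 : 0 < ‖q‖) (hq1 : ‖q‖ < 1)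
    (n a : ℕ) (ha : 1 ≤ a) (x : ℤ) :
    qBZ q⁻¹ a n (1 - x) = (-1) ^ n * q ^ (a * n) * qBZ q a n x :=
  stmt8_general q hq0 n a x
end

section
/- For q ∈ ℂ with 0 < |q| < 1, α ∈ ℕ with α ≥ 1, and n ∈ ℕ with n > 1: q^2 β̃_{n,q}^{(α)}(2) = n q^{1+α} (α/[α]_q) + q^2 - q + β̃_{n,q}^{(α)}. -/
/-!
With `Q = q^{αl+1}` one has `q² q^{2αl} = Q²` and `Q²/(1-Q) = 1/(1-Q) - 1 - Q`, so
`q² β̃(2) = β̃ - (1-q)/(1-q^α)^n · Σ_l c_l (1 + q·q^{αl})` where `c_l = C(n,l) (-1)^l (αl+1)`.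
The generating polynomial `Σ_l c_l t^l = (1-t)^n - αn t (1-t)^{n-1}` vanishes at `t = 1` once
`n ≥ 2`, and its value at `t = q^α` produces the remaining terms.
-/

open Finset

section Binomial

variable {R : Type*} [CommRing R]

theorem sum_range_choose_mul_pow (n : ℕ) (t : R) :
    ∑ l ∈ range (n + 1), (n.choose l : R) * t ^ l = (1 + t) ^ n := by
  simp [add_comm 1 t, add_pow, mul_comm]

theorem sum_range_choose_mul_mul_pow (n : ℕ) (t : R) :
    ∑ l ∈ range (n + 1), (n.choose l : R) * l * t ^ l = n * t * (1 + t) ^ (n - 1) := by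
  rcases n with _ | m
  · simp
  have hterm (j : ℕ) : ((m + 1).choose (j + 1) : R) * (j + 1 : ℕ) * t ^ (j + 1)
      = (m + 1 : ℕ) * t * ((m.choose j : R) * t ^ j) := by
    have h := congrArg (Nat.cast : ℕ → R) (Nat.add_one_mul_choose_eq m j)
    push_cast at h ⊢
    linear_combination (-t ^ (j + 1)) * h
  rw [sum_range_succ', sum_congr rfl fun j _ => hterm j, ← mul_sum, sum_range_choose_mul_pow]
  simp

theorem sum_range_choose_mul_neg_one_pow_mul_add_one_mul_pow (n : ℕ) (a t : R) :
    ∑ l ∈ range (n + 1), (n.choose l : R) * (-1) ^ l * (a * l + 1) * t ^ l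
      = (1 - t) ^ n - a * n * t * (1 - t) ^ (n - 1) := by
  have h₁ := sum_range_choose_mul_pow n (-t)
  have h₂ := sum_range_choose_mul_mul_pow n (-t)
  rw [← sub_eq_add_neg] at h₁ h₂
  have hterm (l : ℕ) : (n.choose l : R) * (-1) ^ l * (a * l + 1) * t ^ l
      = a * ((n.choose l : R) * l * (-t) ^ l) + (n.choose l : R) * (-t) ^ l := by
    rw [neg_pow]; ring
  rw [sum_congr rfl fun l _ => hterm l, sum_add_distrib, ← mul_sum, h₁, h₂]
  ring

theorem sum_range_choose_mul_neg_one_pow_mul_add_one {n : ℕ} (hn : 2 ≤ n) (a : R) :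
    ∑ l ∈ range (n + 1), (n.choose l : R) * (-1) ^ l * (a * l + 1) = 0 := by
  simpa [zero_pow (by omega : n ≠ 0), zero_pow (by omega : n - 1 ≠ 0)] using
    sum_range_choose_mul_neg_one_pow_mul_add_one_mul_pow n a (1 : R)

end Binomial

theorem pow_ne_one_of_norm_lt_one {𝕜 : Type*} [SeminormedRing 𝕜] [NormOneClass 𝕜] {q : 𝕜}
    (hq : ‖q‖ < 1) {k : ℕ} (hk : k ≠ 0) : q ^ k ≠ 1 := by
  intro h
  have := (norm_pow_le' q (Nat.pos_of_ne_zero hk)).trans_lt (pow_lt_one₀ (norm_nonneg q) hq hk)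
  simp [h] at this

theorem sq_div_one_sub {K : Type*} [Field K] {x : K} (hx : 1 - x ≠ 0) :
    x ^ 2 / (1 - x) = 1 / (1 - x) - (1 + x) := by
  field_simp; ring

theorem sq_mul_qBpoly_two {q : ℂ} (hq : ∀ k : ℕ, 1 - q ^ (k + 1) ≠ 0) (a n : ℕ) :
    q ^ 2 * qBpoly q a n 2 = qB q a n - (1 - q) / (1 - q ^ a) ^ n *
      ∑ l ∈ range (n + 1),
        (n.choose l : ℂ) * (-1) ^ l * ((a : ℂ) * l + 1) * (1 + q * (q ^ a) ^ l) := by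
  have hterm (l : ℕ) : q ^ 2 * ((n.choose l : ℂ) * (-1) ^ l * q ^ (a * l * 2) * ((a : ℂ) * l + 1)
        / (1 - q ^ (a * l + 1)))
      = (n.choose l : ℂ) * (-1) ^ l * ((a : ℂ) * l + 1) / (1 - q ^ (a * l + 1))
        - (n.choose l : ℂ) * (-1) ^ l * ((a : ℂ) * l + 1) * (1 + q * (q ^ a) ^ l) := by
    calc _ = (n.choose l : ℂ) * (-1) ^ l * ((a : ℂ) * l + 1)
          * ((q ^ (a * l + 1)) ^ 2 / (1 - q ^ (a * l + 1))) := by ring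
      _ = _ := by rw [sq_div_one_sub (hq _)]; ring
  unfold qBpoly qB
  rw [mul_left_comm, mul_sum, sum_congr rfl fun l _ => hterm l, sum_sub_distrib, mul_sub]

theorem stmt10_general (q : ℂ) (hq1 : ‖q‖ < 1)
    (a n : ℕ) (ha : 1 ≤ a) (hn : 1 < n) :
    q ^ 2 * qBpoly q a n 2 =
      (n : ℂ) * q ^ (1 + a) * ((a : ℂ) / qnum q a) + q ^ 2 - q + qB q a n := by
  have hq (k : ℕ) (hk : k ≠ 0) : 1 - q ^ k ≠ 0 :=
    sub_ne_zero.2 (pow_ne_one_of_norm_lt_one hq1 hk).symm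
  have hsum : ∑ l ∈ range (n + 1),
      (n.choose l : ℂ) * (-1) ^ l * ((a : ℂ) * l + 1) * (1 + q * (q ^ a) ^ l)
        = q * ((1 - q ^ a) ^ n - a * n * q ^ a * (1 - q ^ a) ^ (n - 1)) := by
    rw [sum_congr rfl fun l _ => mul_one_add _ _, sum_add_distrib,
      sum_range_choose_mul_neg_one_pow_mul_add_one (by omega), zero_add,
      ← sum_range_choose_mul_neg_one_pow_mul_add_one_mul_pow, mul_sum]
    exact sum_congr rfl fun l _ => by ring
  rw [sq_mul_qBpoly_two (fun k => hq _ k.succ_ne_zero), hsum, qnum]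
  obtain ⟨m, rfl⟩ : ∃ m, n = m + 1 := ⟨n - 1, by omega⟩
  rw [Nat.add_sub_cancel]
  have h₁ : 1 - q ≠ 0 := by simpa using hq 1 one_ne_zero
  have hα : 1 - q ^ a ≠ 0 := hq a (by omega)
  field_simp
  ring

theorem stmt10 (q : ℂ) (hq0 : 0 < ‖q‖) (hq1 : ‖q‖ < 1)
    (a n : ℕ) (ha : 1 ≤ a) (hn : 1 < n) :
    q ^ 2 * qBpoly q a n 2 =
      (n : ℂ) * q ^ (1 + a) * ((a : ℂ) / qnum q a) + q ^ 2 - q + qB q a n :=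
  stmt10_general q hq1 a n ha hn
end
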